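/- arXiv:2109.12927 — 2 statements merged into one kernel-verified Lean document; each statement's English description precedes it below -/
import Mathlib

section
/- Let μ be a symmetric probability measure on ℝ (invariant under x ↦ -x) with finite first moment, and for t > 0 let μ_t be the pushforward of μ under x ↦ √t · x. Then the family (μ_t)_{t>0} is increasing in the convex order: for 0 < s ≤ t and every convex function φ : ℝ → ℝ with φ integrable against μ_s and μ_t, ∫ φ dμ_s ≤ ∫ φ dμ_t. -/
open MeasureTheory

/-- if `μ` is a symmetric probability measure on `ℝ` with finite first
moment, then the family `μ_t = (x ↦ √t·x)_* μ`, `t > 0`, is increasing in convex order. -/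
theorem stmt_15 (μ : Measure ℝ) [IsProbabilityMeasure μ]
    (hsym : μ.map (fun x => -x) = μ) (hmom : Integrable (fun x => |x|) μ)
    (s t : ℝ) (hs : 0 < s) (hst : s ≤ t) (φ : ℝ → ℝ) (hφ : ConvexOn ℝ Set.univ φ)
    (hφs : Integrable φ (μ.map (fun x => Real.sqrt s * x)))
    (hφt : Integrable φ (μ.map (fun x => Real.sqrt t * x))) :
    ∫ x, φ x ∂(μ.map (fun x => Real.sqrt s * x))
      ≤ ∫ x, φ x ∂(μ.map (fun x => Real.sqrt t * x)) := by
  have hts : 0 < t := lt_of_lt_of_le hs hst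
  set c := Real.sqrt t with hcdef
  set d := Real.sqrt s with hddef
  have hc : 0 < c := Real.sqrt_pos.mpr hts
  have hd : 0 ≤ d := Real.sqrt_nonneg s
  have hr0 : 0 ≤ d / c := div_nonneg hd hc.le
  have hr1 : d / c ≤ 1 := by
    rw [div_le_one hc]; exact Real.sqrt_le_sqrt hst
  set a := (1 + d / c) / 2 with hadef
  have ha0 : 0 ≤ a := by unfold a; linarith
  have hb0 : 0 ≤ 1 - a := by unfold a; linarith
  have hcont : Continuous φ :=
    continuousOn_univ.mp (hφ.continuousOn isOpen_univ)
  have hmφ : Measurable φ := hcont.measurable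
  have hmc : Measurable fun x : ℝ => c * x := by fun_prop
  have hmd : Measurable fun x : ℝ => d * x := by fun_prop
  have hmn : Measurable fun x : ℝ => -x := by fun_prop
  -- transfer integrability to μ
  have It : Integrable (fun x => φ (c * x)) μ :=
    (integrable_map_measure hmφ.aestronglyMeasurable hmc.aemeasurable).mp hφt
  have Is : Integrable (fun x => φ (d * x)) μ :=
    (integrable_map_measure hmφ.aestronglyMeasurable hmd.aemeasurable).mp hφs
  have It' : Integrable (fun x => φ (c * (-x))) μ := by
    have h1 : Integrable (fun x => φ (c * x)) (μ.map (fun x => -x)) := by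
      rw [hsym]; exact It
    exact (integrable_map_measure (by exact hmφ.comp hmc :
      Measurable fun y => φ (c * y)).aestronglyMeasurable hmn.aemeasurable).mp h1
  -- key integral identity from symmetry
  have hneg : ∫ x, φ (c * (-x)) ∂μ = ∫ x, φ (c * x) ∂μ := by
    calc ∫ x, φ (c * (-x)) ∂μ = ∫ x, φ (c * x) ∂(μ.map (fun x => -x)) := by
          rw [integral_map hmn.aemeasurable (by exact hmφ.comp hmc :
            Measurable fun y => φ (c * y)).aestronglyMeasurable]
      _ = ∫ x, φ (c * x) ∂μ := by rw [hsym]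
  -- rewrite both sides as integrals over μ
  rw [integral_map hmd.aemeasurable hmφ.aestronglyMeasurable,
    integral_map hmc.aemeasurable hmφ.aestronglyMeasurable]
  -- pointwise convexity bound
  have hpt : ∀ x, φ (d * x) ≤ a * φ (c * x) + (1 - a) * φ (c * (-x)) := by
    intro x
    have hx : a * (c * x) + (1 - a) * (c * (-x)) = d * x := by
      have h2 : (2 * a - 1) * c = d := by
        unfold a
        field_simp
        ring
      rw [← h2]; ring
    have h3 := hφ.2 (Set.mem_univ (c * x)) (Set.mem_univ (c * (-x))) ha0 hb0
      (by ring : a + (1 - a) = 1)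
    rw [smul_eq_mul, smul_eq_mul, smul_eq_mul, smul_eq_mul, hx] at h3
    exact h3
  calc ∫ x, φ (d * x) ∂μ
      ≤ ∫ x, (a * φ (c * x) + (1 - a) * φ (c * (-x))) ∂μ := by
        apply integral_mono Is ((It.const_mul a).add (It'.const_mul (1 - a)))
        intro x; exact hpt x
    _ = a * ∫ x, φ (c * x) ∂μ + (1 - a) * ∫ x, φ (c * (-x)) ∂μ := by
        rw [integral_add (It.const_mul a) (It'.const_mul (1 - a)),
          integral_const_mul, integral_const_mul]
    _ = ∫ x, φ (c * x) ∂μ := by rw [hneg]; ring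
end

section
/- Let l > 0 and let f be a function defined on {b} ∪ [x, ∞) near x, where b = x - l, such that f is twice (one-sidedly) differentiable at x with lf'(x) = f(x) - f(b). Then lim_{ε→0+} [ (l/(l+ε))(f(x+ε) - f(x)) + (ε/(l+ε))(f(b) - f(x)) ] / ε² = f''(x)/2. -/
open Filter

/-- at a left endpoint `x` of an interval, with neighbouring point
`b = x - l`, if `f` has one-sided first and second derivatives at `x` (in the sense of the
first-order difference quotient and the second-order Taylor remainder from the right) and
satisfies the gluing condition `l·f'(x) = f(x) - f(b)`, then
`[(l/(l+ε))(f(x+ε) - f(x)) + (ε/(l+ε))(f(b) - f(x))]/ε² → f''(x)/2` as `ε → 0+`. -/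
theorem stmt_19 (f : ℝ → ℝ) (x l : ℝ) (hl : 0 < l) (b : ℝ) (hb : b = x - l)
    (f' f'' : ℝ)
    (h1 : Tendsto (fun ε => (f (x + ε) - f x) / ε) (nhdsWithin 0 (Set.Ioi 0)) (nhds f'))
    (h2 : Tendsto (fun ε => (f (x + ε) - f x - ε * f') / ε ^ 2)
      (nhdsWithin 0 (Set.Ioi 0)) (nhds (f'' / 2)))
    (hglue : l * f' = f x - f b) :
    Tendsto (fun ε =>
        ((l / (l + ε)) * (f (x + ε) - f x) + (ε / (l + ε)) * (f b - f x)) / ε ^ 2)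
      (nhdsWithin 0 (Set.Ioi 0)) (nhds (f'' / 2)) := by
  have hA : Tendsto (fun ε : ℝ => l / (l + ε)) (nhdsWithin 0 (Set.Ioi 0)) (nhds 1) := by
    have : Tendsto (fun ε : ℝ => l / (l + ε)) (nhds 0) (nhds (l / (l + 0))) := by
      apply Tendsto.div tendsto_const_nhds (tendsto_const_nhds.add tendsto_id)
      simpa using hl.ne'
    simpa [hl.ne'] using this.mono_left nhdsWithin_le_nhds
  have key := hA.mul h2
  rw [one_mul] at key
  apply key.congr'
  filter_upwards [self_mem_nhdsWithin] with ε hε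
  have hε : (0:ℝ) < ε := hε
  have hlε : l + ε ≠ 0 := by positivity
  have hfb : f b - f x = -(l * f') := by rw [hglue]; ring
  rw [hfb]
  field_simp
  ring
end
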